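/- Let N = ⟨a, t | a^25 = 1, t a t⁻¹ = a^6⟩ and N' = ⟨a', t' | a'^25 = 1, t' a' t'⁻¹ = a'^11⟩. The assignment a ↦ a', t ↦ t'³ extends to a well-defined injective group homomorphism ι : N → N'. Similarly, a' ↦ a, t' ↦ t² extends to a well-defined injective homomorphism ι' : N' → N. -/

import Mathlib

/-- The automorphism of `Multiplicative (ZMod 25)` given by multiplication by the unit `u`. -/
def mulBy25 (u : (ZMod 25)ˣ) : MulAut (Multiplicative (ZMod 25)) :=
  AddEquiv.toMultiplicative (AddAut.mulLeft u)

/-- The action of `ℤ` on `ℤ/25ℤ` in which the generator acts by multiplication by `u`. -/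
def act25 (u : (ZMod 25)ˣ) : Multiplicative ℤ →* MulAut (Multiplicative (ZMod 25)) :=
  zpowersHom (MulAut (Multiplicative (ZMod 25))) (mulBy25 u)


/-- mulBy25 as a monoid hom. -/
def mulBy25Hom : (ZMod 25)ˣ →* MulAut (Multiplicative (ZMod 25)) where
  toFun := mulBy25
  map_one' := by ext x; simp [mulBy25]; rfl
  map_mul' u v := by ext x; simp [mulBy25, mul_assoc]; rfl

lemma act_eq (u v : (ZMod 25)ˣ) (k : ℕ) (h : v ^ k = u) (g : Multiplicative ℤ) :
    act25 u g = act25 v (g ^ k) := by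
  have : mulBy25 u = (mulBy25 v) ^ k := by
    rw [← h]; exact (map_pow mulBy25Hom v k)
  simp only [act25, zpowersHom_apply, this, toAdd_pow]
  rw [nsmul_eq_mul, ← zpow_natCast, ← zpow_mul]

open SemidirectProduct in
def myLift (u v : (ZMod 25)ˣ) (k : ℕ) (h : v ^ k = u) :
    (Multiplicative (ZMod 25) ⋊[act25 u] Multiplicative ℤ) →*
      (Multiplicative (ZMod 25) ⋊[act25 v] Multiplicative ℤ) :=
  lift inl (inr.comp (powMonoidHom k)) (fun g => by
    refine MonoidHom.ext fun n => ?_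
    simp only [MonoidHom.comp_apply, MulEquiv.coe_toMonoidHom, MulAut.conj_apply,
      powMonoidHom_apply]
    rw [← map_inv, ← inl_aut, ← act_eq u v k h])

lemma myLift_apply (u v : (ZMod 25)ˣ) (k : ℕ) (h : v ^ k = u)
    (x : Multiplicative (ZMod 25)) (g : Multiplicative ℤ) :
    myLift u v k h ⟨x, g⟩ = ⟨x, g ^ k⟩ := by
  rw [SemidirectProduct.mk_eq_inl_mul_inr, map_mul]
  simp [myLift, SemidirectProduct.mk_eq_inl_mul_inr]

lemma myLift_inj (u v : (ZMod 25)ˣ) (k : ℕ) (hk : k ≠ 0) (h : v ^ k = u) :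
    Function.Injective (myLift u v k h) := by
  intro p q hpq
  rw [← SemidirectProduct.inl_left_mul_inr_right p,
    ← SemidirectProduct.inl_left_mul_inr_right q] at hpq ⊢
  rw [← SemidirectProduct.mk_eq_inl_mul_inr, ← SemidirectProduct.mk_eq_inl_mul_inr,
    myLift_apply, myLift_apply] at hpq
  have h1 := congrArg SemidirectProduct.left hpq
  have h2 := congrArg SemidirectProduct.right hpq
  simp only at h1 h2
  have h2' : p.right = q.right := by
    have h3 := congrArg Multiplicative.toAdd h2
    simp only [toAdd_pow, nsmul_eq_mul] at h3
    have hk' : (k : ℤ) ≠ 0 := by exact_mod_cast hk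
    exact Multiplicative.toAdd.injective (mul_left_cancel₀ hk' h3)
  rw [h1, h2']

/-- With `N = ⟨a, t | a²⁵ = 1, t a t⁻¹ = a⁶⟩` and `N' = ⟨a', t' | a'²⁵ = 1, t' a' t'⁻¹ = a'¹¹⟩`
(realized as semidirect products), the assignment `a ↦ a'`, `t ↦ t'³` extends to an injective
homomorphism `ι : N → N'`, and `a' ↦ a`, `t' ↦ t²` extends to an injective homomorphism
`ι' : N' → N`. -/
theorem stmt_6 :
    let N := Multiplicative (ZMod 25) ⋊[act25 (ZMod.unitOfCoprime 6 (by decide))]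
      Multiplicative ℤ
    let N' := Multiplicative (ZMod 25) ⋊[act25 (ZMod.unitOfCoprime 11 (by decide))]
      Multiplicative ℤ
    let a : N := ⟨Multiplicative.ofAdd (1 : ZMod 25), 1⟩
    let t : N := ⟨1, Multiplicative.ofAdd (1 : ℤ)⟩
    let a' : N' := ⟨Multiplicative.ofAdd (1 : ZMod 25), 1⟩
    let t' : N' := ⟨1, Multiplicative.ofAdd (1 : ℤ)⟩
    (∃ ι : N →* N', Function.Injective ι ∧ ι a = a' ∧ ι t = t' ^ 3) ∧
    (∃ ι' : N' →* N, Function.Injective ι' ∧ ι' a' = a ∧ ι' t' = t ^ 2) := by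
  intro N N' a t a' t'
  have h1 : ((ZMod.unitOfCoprime 11 (by decide) : (ZMod 25)ˣ)) ^ 3 = ZMod.unitOfCoprime 6 (by decide) := by
    ext; decide
  have h2 : ((ZMod.unitOfCoprime 6 (by decide) : (ZMod 25)ˣ)) ^ 2 = ZMod.unitOfCoprime 11 (by decide) := by
    ext; decide
  constructor
  · refine ⟨myLift _ _ 3 h1, myLift_inj _ _ 3 (by norm_num) h1, ?_, ?_⟩
    · rw [show a = ⟨Multiplicative.ofAdd (1 : ZMod 25), 1⟩ from rfl, myLift_apply]
      simp [a']
    · rw [show t = ⟨1, Multiplicative.ofAdd (1 : ℤ)⟩ from rfl, myLift_apply]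
      have hv : t' = SemidirectProduct.inr (Multiplicative.ofAdd (1 : ℤ)) := rfl
      rw [hv, ← MonoidHom.map_pow SemidirectProduct.inr]
      rfl
  · refine ⟨myLift _ _ 2 h2, myLift_inj _ _ 2 (by norm_num) h2, ?_, ?_⟩
    · rw [show a' = ⟨Multiplicative.ofAdd (1 : ZMod 25), 1⟩ from rfl, myLift_apply]
      simp [a]
    · rw [show t' = ⟨1, Multiplicative.ofAdd (1 : ℤ)⟩ from rfl, myLift_apply]
      have hv : t = SemidirectProduct.inr (Multiplicative.ofAdd (1 : ℤ)) := rfl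
      rw [hv, ← MonoidHom.map_pow SemidirectProduct.inr]
      rfl
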